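/- arXiv:2507.00283 — 4 statements merged into one kernel-verified Lean document; each statement's English description precedes it below -/
import Mathlib

section
/- Let G be a group, X ⊆ G a subset closed under conjugation, and g an element of the submonoid Mon(X) generated by X. If x_1, …, x_n ∈ Mon(X) satisfy x_1·x_2⋯x_n = g and ℓ(x_1) + ℓ(x_2) + ⋯ + ℓ(x_n) = ℓ(g), then for every choice of indices 1 ≤ i_1 < i_2 < ⋯ < i_k ≤ n, the product x_{i_1}·x_{i_2}⋯x_{i_k} lies in the interval [1,g], i.e. x_{i_1}⋯x_{i_k} ≤ g. -/
/-!
Since `X` is closed under conjugation, `ℓ` is subadditive on `Mon(X)` and does not increase under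
conjugation. Pulling the chosen factors to the front past the others conjugates only the skipped
factors, so `g = h * r` with `h = x_{i₁} ⋯ x_{i_k}` and `ℓ(h) + ℓ(r) ≤ ∑ ℓ(xᵢ) = ℓ(g)`, while
subadditivity gives `ℓ(g) ≤ ℓ(h) + ℓ(r)`.
-/

/-- The length of `g` as a word over the generating set `X`:
the minimal `n` such that `g` is a product of `n` elements of `X`. -/
noncomputable def wlen {G : Type*} [Group G] (X : Set G) (g : G) : ℕ :=
  sInf {n | ∃ l : List G, l.length = n ∧ (∀ x ∈ l, x ∈ X) ∧ l.prod = g}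

/-- The prefix partial order: `h ≤ g` iff `h ∈ Mon(X)`, `h⁻¹g ∈ Mon(X)` and
`ℓ(h) + ℓ(h⁻¹g) = ℓ(g)`.  Then `intLe X h g` says `h` lies in the interval `[1,g]`. -/
def intLe {G : Type*} [Group G] (X : Set G) (h g : G) : Prop :=
  h ∈ Submonoid.closure X ∧ h⁻¹ * g ∈ Submonoid.closure X ∧
    wlen X h + wlen X (h⁻¹ * g) = wlen X g

lemma List.ofFn_comp_sublist {α : Type*} {n k : ℕ} (f : Fin n → α) {ι : Fin k → Fin n}
    (hι : StrictMono ι) : (List.ofFn (f ∘ ι)).Sublist (List.ofFn f) := by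
  rw [← List.map_ofFn, List.ofFn_eq_map (f := f)]
  refine List.Sublist.map f (List.sublist_of_subperm_of_sortedLE ?_ hι.sortedLT_ofFn.sortedLE
    (List.sortedLT_finRange n).sortedLE)
  exact hι.sortedLT_ofFn.nodup.subperm fun i _ => List.mem_finRange i

section WordLength

variable {G : Type*} [Group G] {X : Set G}

lemma wlen_le_length {l : List G} (hl : ∀ x ∈ l, x ∈ X) : wlen X l.prod ≤ l.length :=
  Nat.sInf_le ⟨l, rfl, hl, rfl⟩

lemma exists_list_length_eq_wlen {g : G} (hg : g ∈ Submonoid.closure X) :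
    ∃ l : List G, l.length = wlen X g ∧ (∀ x ∈ l, x ∈ X) ∧ l.prod = g := by
  obtain ⟨l, hl, rfl⟩ := Submonoid.exists_list_of_mem_closure hg
  exact Nat.sInf_mem
    (s := {n | ∃ l' : List G, l'.length = n ∧ (∀ x ∈ l', x ∈ X) ∧ l'.prod = l.prod})
    ⟨_, l, rfl, hl, rfl⟩

lemma wlen_one : wlen X (1 : G) = 0 :=
  Nat.sInf_eq_zero.2 (Or.inl ⟨[], rfl, by simp, rfl⟩)

lemma wlen_mul_le {a b : G} (ha : a ∈ Submonoid.closure X) (hb : b ∈ Submonoid.closure X) :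
    wlen X (a * b) ≤ wlen X a + wlen X b := by
  obtain ⟨la, hla, hXa, rfl⟩ := exists_list_length_eq_wlen ha
  obtain ⟨lb, hlb, hXb, rfl⟩ := exists_list_length_eq_wlen hb
  rw [← hla, ← hlb, ← List.length_append, ← List.prod_append]
  exact wlen_le_length fun x hx => (List.mem_append.1 hx).elim (hXa x) (hXb x)

lemma map_mem_closure_of_mapsTo {f : G →* G} (hf : ∀ x ∈ X, f x ∈ X) {a : G}
    (ha : a ∈ Submonoid.closure X) : f a ∈ Submonoid.closure X :=
  (Submonoid.closure_le.2 fun x hx => Submonoid.subset_closure (hf x hx) :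
    Submonoid.closure X ≤ (Submonoid.closure X).comap f) ha

lemma wlen_map_le {f : G →* G} (hf : ∀ x ∈ X, f x ∈ X) {a : G}
    (ha : a ∈ Submonoid.closure X) : wlen X (f a) ≤ wlen X a := by
  obtain ⟨l, hl, hX, rfl⟩ := exists_list_length_eq_wlen ha
  rw [← hl, map_list_prod, ← List.length_map f]
  exact wlen_le_length fun y hy => by
    obtain ⟨x, hx, rfl⟩ := List.mem_map.1 hy
    exact hf x (hX x hx)

lemma mem_closure_and_wlen_add_le_of_sublist (hX : ∀ g x, x ∈ X → g * x * g⁻¹ ∈ X)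
    {S L : List G} (hSL : S.Sublist L) (hL : ∀ a ∈ L, a ∈ Submonoid.closure X) :
    S.prod⁻¹ * L.prod ∈ Submonoid.closure X ∧
      wlen X S.prod + wlen X (S.prod⁻¹ * L.prod) ≤ (L.map (wlen X)).sum := by
  induction hSL with
  | slnil => simp [wlen_one]
  | @cons S L a _ ih =>
    obtain ⟨hr, hlen⟩ := ih fun b hb => hL b (List.mem_cons_of_mem a hb)
    have ha := hL a List.mem_cons_self
    -- skipping `a` conjugates it by the product of the factors already chosen
    let conj : G →* G := (MulAut.conj S.prod⁻¹).toMonoidHom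
    have hconj : ∀ x ∈ X, conj x ∈ X := fun x => hX _ x
    have hc := map_mem_closure_of_mapsTo hconj ha
    have hsplit : S.prod⁻¹ * (a :: L).prod = conj a * (S.prod⁻¹ * L.prod) := by
      simp only [conj, MulEquiv.coe_toMonoidHom, MulAut.conj_apply, List.prod_cons, inv_inv]
      group
    rw [hsplit, List.map_cons, List.sum_cons]
    refine ⟨Submonoid.mul_mem _ hc hr, ?_⟩
    have := wlen_mul_le hc hr
    have := wlen_map_le hconj ha
    omega
  | @cons_cons S L a hSL ih =>
    obtain ⟨hr, hlen⟩ := ih fun b hb => hL b (List.mem_cons_of_mem a hb)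
    have ha := hL a List.mem_cons_self
    have hS : S.prod ∈ Submonoid.closure X :=
      list_prod_mem fun b hb => hL b (List.mem_cons_of_mem a (hSL.subset hb))
    have hcancel : (a :: S).prod⁻¹ * (a :: L).prod = S.prod⁻¹ * L.prod := by
      simp only [List.prod_cons]; group
    rw [hcancel, List.map_cons, List.sum_cons, List.prod_cons]
    refine ⟨hr, ?_⟩
    have := wlen_mul_le ha hS
    omega

lemma intLe_prod_of_sublist (hX : ∀ g x, x ∈ X → g * x * g⁻¹ ∈ X) {S L : List G}
    (hSL : S.Sublist L) (hL : ∀ a ∈ L, a ∈ Submonoid.closure X)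
    (hsum : (L.map (wlen X)).sum = wlen X L.prod) :
    intLe X S.prod L.prod := by
  obtain ⟨hr, hle⟩ := mem_closure_and_wlen_add_le_of_sublist hX hSL hL
  have hS : S.prod ∈ Submonoid.closure X := list_prod_mem fun a ha => hL a (hSL.subset ha)
  have hge : wlen X L.prod ≤ wlen X S.prod + wlen X (S.prod⁻¹ * L.prod) := by
    simpa using wlen_mul_le hS hr
  exact ⟨hS, hr, by omega⟩

end WordLength

theorem stmt0_general {G : Type*} [Group G] (X : Set G)
    (hX : ∀ g x, x ∈ X → g * x * g⁻¹ ∈ X)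
    (g : G)
    (n : ℕ) (x : Fin n → G)
    (hmem : ∀ i, x i ∈ Submonoid.closure X)
    (hprod : (List.ofFn x).prod = g)
    (hlen : ∑ i, wlen X (x i) = wlen X g)
    (k : ℕ) (ι : Fin k → Fin n) (hι : StrictMono ι) :
    intLe X ((List.ofFn (x ∘ ι)).prod) g := by
  subst hprod
  refine intLe_prod_of_sublist hX (List.ofFn_comp_sublist x hι) ?_ ?_
  · simpa [List.mem_ofFn] using hmem
  · rwa [List.map_ofFn, List.sum_ofFn]

/-- if `x₁ ⋯ xₙ = g` with `ℓ(x₁) + ⋯ + ℓ(xₙ) = ℓ(g)` and all `xᵢ ∈ Mon(X)`,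
then any subproduct `x_{i₁} ⋯ x_{i_k}` (indices strictly increasing) lies in `[1,g]`. -/
theorem stmt0 {G : Type*} [Group G] (X : Set G)
    (hX : ∀ g x, x ∈ X → g * x * g⁻¹ ∈ X)
    (g : G) (hg : g ∈ Submonoid.closure X)
    (n : ℕ) (x : Fin n → G)
    (hmem : ∀ i, x i ∈ Submonoid.closure X)
    (hprod : (List.ofFn x).prod = g)
    (hlen : ∑ i, wlen X (x i) = wlen X g)
    (k : ℕ) (ι : Fin k → Fin n) (hι : StrictMono ι) :
    intLe X ((List.ofFn (x ∘ ι)).prod) g :=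
  stmt0_general X hX g n x hmem hprod hlen k ι hι
end

section
/- Let g ∈ Mon(X) and let u, v, w ∈ F(G,g,I) with v ⊆ u and v ⊆ w. Define the G-multisets v⁻¹u and v⁻¹w by (v⁻¹u)(r) = v(r)⁻¹·u(r) and (v⁻¹w)(r) = v(r)⁻¹·w(r) for r ∈ [0,1]. Then u ⊆ w if and only if v⁻¹u ⊆ v⁻¹w, i.e. u(r) ≤ w(r) for all r ∈ [0,1] if and only if v(r)⁻¹u(r) ≤ v(r)⁻¹w(r) for all r ∈ [0,1]. -/
/-- A `G`-multiset on `[0,1]`: a function `[0,1] → G` which is the identity for all but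
finitely many points. -/
structure GMultiset (G : Type*) [Group G] where
  f : Set.Icc (0 : ℝ) 1 → G
  fin : Set.Finite {r | f r ≠ 1}

/-- `ρ(u)`: the product of the values of `u` taken in increasing order of `r ∈ [0,1]`. -/
noncomputable def rho {G : Type*} [Group G] (u : GMultiset G) : G :=
  ((u.fin.toFinset.sort (· ≤ ·)).map u.f).prod

/-- Membership in `F(G,g,I)`: `Σ_r ℓ(u(r)) = ℓ(ρ(u))` and `ρ(u) ≤ g`. -/
noncomputable def memF {G : Type*} [Group G] (X : Set G) (g : G) (u : GMultiset G) : Prop :=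
  (∑ r ∈ u.fin.toFinset, wlen X (u.f r)) = wlen X (rho u) ∧ intLe X (rho u) g

/-- The subfactorization order: `u ⊆ v` iff `u(r) ≤ v(r)` for all `r ∈ [0,1]`. -/
def msub {G : Type*} [Group G] (X : Set G) (u v : GMultiset G) : Prop :=
  ∀ r, intLe X (u.f r) (v.f r)

/-- for `u, v, w ∈ F(G,g,I)` with `v ⊆ u` and `v ⊆ w`, one has `u ⊆ w` iff
`v⁻¹u ⊆ v⁻¹w`, i.e. `u(r) ≤ w(r)` for all `r` iff `v(r)⁻¹u(r) ≤ v(r)⁻¹w(r)` for all `r`. -/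
theorem stmt6 {G : Type*} [Group G] (X : Set G)
    (hX : ∀ g x, x ∈ X → g * x * g⁻¹ ∈ X)
    (g : G) (hg : g ∈ Submonoid.closure X)
    (u v w : GMultiset G)
    (hu : memF X g u) (hv : memF X g v) (hw : memF X g w)
    (hvu : msub X v u) (hvw : msub X v w) :
    msub X u w ↔ (∀ r, intLe X ((v.f r)⁻¹ * u.f r) ((v.f r)⁻¹ * w.f r)) := by
  have key : ∀ r, ((v.f r)⁻¹ * u.f r)⁻¹ * ((v.f r)⁻¹ * w.f r) = (u.f r)⁻¹ * w.f r := by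
    intro r; group
  constructor
  · intro h r
    obtain ⟨ha1, ha2, ha3⟩ := hvu r
    obtain ⟨hb1, hb2, hb3⟩ := hvw r
    obtain ⟨hc1, hc2, hc3⟩ := h r
    refine ⟨ha2, ?_, ?_⟩
    · rw [key]; exact hc2
    · rw [key]; omega
  · intro h r
    obtain ⟨ha1, ha2, ha3⟩ := hvu r
    obtain ⟨hb1, hb2, hb3⟩ := hvw r
    obtain ⟨hc1, hc2, hc3⟩ := h r
    rw [key] at hc2 hc3
    refine ⟨?_, hc2, by omega⟩
    have := mul_mem ha1 ha2
    simpa using this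
end

section
/- Let g ∈ Mon(X) and u ∈ F(G,g,I). Then the lower set ↓(u) = {v ∈ F(G,g,I) : v ⊆ u} is order-isomorphic, via the map v ↦ (v(r))_{r ∈ [0,1]}, to the product poset ∏_{r ∈ [0,1]} [1, u(r)] with componentwise order (all but finitely many factors of this product are the one-element poset). In particular, if the nontrivial values of u are x_L = u(0), x_1, …, x_k (at points of (0,1)) and x_R = u(1), then ↓(u) is order-isomorphic to the product of intervals [1,x_L] × [1,x_1] × ⋯ × [1,x_k] × [1,x_R]. -/
/-!
The lower set of `u` consists of the multisets `v` with `v(r) ≤ u(r)` for every `r` that are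
themselves in `F(G,g,I)`; the content of the theorem is that the last condition is automatic.
Going through the support of `u` from left to right, one shows by induction that the prefix
products satisfy `ℓ(∏ v) = ∑ ℓ(v(r))` and `∏ v ≤ ∏ u`. The inductive step rests on the identity
`(bQ)⁻¹(aP) = (Q⁻¹(b⁻¹a)Q)(Q⁻¹P)`: since `X` is closed under conjugation, `ℓ` is
conjugation-invariant, so `ℓ(aP) ≤ ℓ(b) + ℓ(Q) + ℓ(b⁻¹a) + ℓ(Q⁻¹P) = ℓ(a) + ℓ(P)`, and when the
right-hand side is `ℓ(aP)` every intermediate inequality is an equality.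
-/

section WordLength

variable {G : Type*} [Group G] {X : Set G}

lemma wlen_prod_le_length (l : List G) (hl : ∀ x ∈ l, x ∈ X) : wlen X l.prod ≤ l.length :=
  Nat.sInf_le ⟨l, rfl, hl, rfl⟩

lemma eq_one_of_wlen_eq_zero {g : G} (hg : g ∈ Submonoid.closure X) (h : wlen X g = 0) :
    g = 1 := by
  obtain ⟨l, hlen, -, rfl⟩ := exists_list_length_eq_wlen hg
  rw [h, List.length_eq_zero_iff] at hlen
  simp [hlen]

lemma wlen_list_prod_le (l : List G) (hl : ∀ x ∈ l, x ∈ Submonoid.closure X) :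
    wlen X l.prod ≤ (l.map (wlen X)).sum := by
  induction l with
  | nil => simp [wlen_one]
  | cons a t ih =>
    have ht : ∀ x ∈ t, x ∈ Submonoid.closure X := fun x hx => hl x (List.mem_cons_of_mem _ hx)
    rw [List.prod_cons, List.map_cons, List.sum_cons]
    exact (wlen_mul_le (hl a List.mem_cons_self) (Submonoid.list_prod_mem _ ht)).trans
      (Nat.add_le_add_left (ih ht) _)

variable (hX : ∀ g x, x ∈ X → g * x * g⁻¹ ∈ X)
include hX

lemma conj_mem_closure {a : G} (q : G) (ha : a ∈ Submonoid.closure X) :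
    q * a * q⁻¹ ∈ Submonoid.closure X :=
  (Submonoid.closure_le (S := (Submonoid.closure X).comap (MulAut.conj q).toMonoidHom)).2
    (fun x hx => Submonoid.subset_closure (hX q x hx)) ha

lemma wlen_conj_le {a : G} (q : G) (ha : a ∈ Submonoid.closure X) :
    wlen X (q * a * q⁻¹) ≤ wlen X a := by
  obtain ⟨l, hl, hlX, rfl⟩ := exists_list_length_eq_wlen ha
  have hconj : q * l.prod * q⁻¹ = (l.map (MulAut.conj q)).prod := map_list_prod (MulAut.conj q) l
  rw [hconj, ← hl, ← List.length_map (MulAut.conj q)]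
  exact wlen_prod_le_length _ fun y hy => by
    obtain ⟨x, hx, rfl⟩ := List.mem_map.mp hy
    exact hX q x (hlX x hx)

lemma wlen_conj {a : G} (q : G) (ha : a ∈ Submonoid.closure X) :
    wlen X (q * a * q⁻¹) = wlen X a := by
  refine le_antisymm (wlen_conj_le hX q ha) ?_
  simpa [mul_assoc] using wlen_conj_le hX q⁻¹ (conj_mem_closure hX q ha)

end WordLength

section IntervalOrder

variable {G : Type*} [Group G] {X : Set G}

lemma intLe.mem_closure_right {a b : G} (h : intLe X a b) : b ∈ Submonoid.closure X := by
  simpa using Submonoid.mul_mem _ h.1 h.2.1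

lemma intLe_one_left {b : G} (hb : b ∈ Submonoid.closure X) : intLe X 1 b :=
  ⟨Submonoid.one_mem _, by simpa using hb, by simp [wlen_one]⟩

lemma eq_one_of_intLe_one {a : G} (h : intLe X a 1) : a = 1 := by
  obtain ⟨ha, -, hlen⟩ := h
  rw [wlen_one] at hlen
  exact eq_one_of_wlen_eq_zero ha (by omega)

lemma intLe_trans {a b c : G} (hab : intLe X a b) (hbc : intLe X b c) : intLe X a c := by
  obtain ⟨ha, hab, hlab⟩ := hab
  obtain ⟨-, hbc, hlbc⟩ := hbc
  have hac : a⁻¹ * c = (a⁻¹ * b) * (b⁻¹ * c) := by group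
  have hmem : a⁻¹ * c ∈ Submonoid.closure X := hac ▸ Submonoid.mul_mem _ hab hbc
  have h1 : wlen X (a⁻¹ * c) ≤ wlen X (a⁻¹ * b) + wlen X (b⁻¹ * c) := hac ▸ wlen_mul_le hab hbc
  have h2 : wlen X c ≤ wlen X a + wlen X (a⁻¹ * c) := by simpa using wlen_mul_le ha hmem
  exact ⟨ha, hmem, by omega⟩

variable (hX : ∀ g x, x ∈ X → g * x * g⁻¹ ∈ X)
include hX

lemma wlen_mul_eq_and_intLe_mul {a b P Q : G} (hba : intLe X b a) (hQP : intLe X Q P)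
    (haP : wlen X a + wlen X P = wlen X (a * P)) :
    wlen X b + wlen X Q = wlen X (b * Q) ∧ intLe X (b * Q) (a * P) := by
  obtain ⟨hb, hba, hlba⟩ := hba
  obtain ⟨hQ, hQP, hlQP⟩ := hQP
  have hc := conj_mem_closure hX Q⁻¹ hba
  have hquot : (b * Q)⁻¹ * (a * P) = (Q⁻¹ * (b⁻¹ * a) * Q⁻¹⁻¹) * (Q⁻¹ * P) := by group
  have hmem : (b * Q)⁻¹ * (a * P) ∈ Submonoid.closure X := hquot ▸ Submonoid.mul_mem _ hc hQP
  have hbQ : b * Q ∈ Submonoid.closure X := Submonoid.mul_mem _ hb hQ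
  have h1 : wlen X ((b * Q)⁻¹ * (a * P)) ≤ wlen X (b⁻¹ * a) + wlen X (Q⁻¹ * P) := by
    rw [hquot, ← wlen_conj hX Q⁻¹ hba]
    exact wlen_mul_le hc hQP
  have h2 : wlen X (b * Q) ≤ wlen X b + wlen X Q := wlen_mul_le hb hQ
  have h3 : wlen X (a * P) ≤ wlen X (b * Q) + wlen X ((b * Q)⁻¹ * (a * P)) := by
    simpa only [mul_inv_cancel_left] using wlen_mul_le hbQ hmem
  exact ⟨by omega, hbQ, hmem, by omega⟩

lemma wlen_prod_map_eq_and_intLe {ι : Type*} {φ ψ : ι → G} (hφψ : ∀ i, intLe X (φ i) (ψ i))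
    (L : List ι) (hψ : (L.map fun i => wlen X (ψ i)).sum = wlen X (L.map ψ).prod) :
    (L.map fun i => wlen X (φ i)).sum = wlen X (L.map φ).prod ∧
      intLe X (L.map φ).prod (L.map ψ).prod := by
  induction L with
  | nil => exact ⟨by simp [wlen_one], intLe_one_left (Submonoid.one_mem _)⟩
  | cons i L ih =>
    have hmem : ∀ x ∈ L.map ψ, x ∈ Submonoid.closure X := by
      simp only [List.mem_map]
      rintro _ ⟨j, -, rfl⟩
      exact (hφψ j).mem_closure_right
    have h1 := wlen_list_prod_le _ hmem
    have h2 := wlen_mul_le (hφψ i).mem_closure_right (Submonoid.list_prod_mem _ hmem)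
    simp only [List.map_map, Function.comp_def] at h1
    simp only [List.prod_cons, List.map_cons, List.sum_cons] at hψ h2 ⊢
    obtain ⟨hL, hleL⟩ := ih (by omega)
    obtain ⟨hiL, hle⟩ := wlen_mul_eq_and_intLe_mul hX (hφψ i) hleL (by omega)
    exact ⟨by omega, hle⟩

end IntervalOrder

section SortedProducts

variable {α : Type*} [LinearOrder α]

lemma Finset.sort_filter (S : Finset α) (p : α → Bool) :
    (S.sort (· ≤ ·)).filter p = (S.filter (p ·)).sort (· ≤ ·) := by
  apply List.Perm.eq_of_pairwise' ((S.pairwise_sort _).filter p) (Finset.pairwise_sort _ _)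
  rw [← Multiset.coe_eq_coe, Finset.sort_eq, Finset.filter_val, ← Finset.sort_eq S (· ≤ ·),
    Multiset.filter_coe]
  simp

lemma Finset.sum_map_sort (S : Finset α) (f : α → ℕ) :
    ((S.sort (· ≤ ·)).map f).sum = ∑ x ∈ S, f x := by
  rw [Finset.sum_eq_multiset_sum, ← Finset.sort_eq S (· ≤ ·), Multiset.map_coe, Multiset.sum_coe]

variable {G : Type*} [Group G]

omit [LinearOrder α] in
lemma List.prod_map_filter_of_eq_one {f : α → G} (p : α → Bool) (hp : ∀ x, p x = false → f x = 1)
    (l : List α) : ((l.filter p).map f).prod = (l.map f).prod := by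
  induction l with
  | nil => rfl
  | cons a t ih =>
    cases hpa : p a
    · simp [hpa, ih, hp a hpa]
    · simp [hpa, ih]

lemma Finset.prod_map_sort_eq_of_subset {S T : Finset α} (hTS : T ⊆ S) {f : α → G}
    (hf : ∀ x, x ∉ T → f x = 1) :
    ((S.sort (· ≤ ·)).map f).prod = ((T.sort (· ≤ ·)).map f).prod := by
  classical
  rw [← List.prod_map_filter_of_eq_one (fun x => decide (x ∈ T)) (by simpa using hf),
    Finset.sort_filter]
  simp only [decide_eq_true_eq, Finset.filter_mem_eq_inter, Finset.inter_eq_right.mpr hTS]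

end SortedProducts

section LowerSet

variable {G : Type*} [Group G] {X : Set G}

lemma GMultiset.ext {v w : GMultiset G} (h : v.f = w.f) : v = w := by
  cases v; cases w; cases h; rfl

lemma eq_one_of_msub {v u : GMultiset G} (hvu : msub X v u) {r : Set.Icc (0 : ℝ) 1}
    (hr : u.f r = 1) : v.f r = 1 :=
  eq_one_of_intLe_one (hr ▸ hvu r)

lemma support_subset_of_msub {v u : GMultiset G} (hvu : msub X v u) :
    v.fin.toFinset ⊆ u.fin.toFinset := fun r hr => by
  simp only [Set.Finite.mem_toFinset, Set.mem_ofPred_eq] at hr ⊢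
  exact fun hu => hr (eq_one_of_msub hvu hu)

def GMultiset.ofForallIntLe (u : GMultiset G) (ϕ : Set.Icc (0 : ℝ) 1 → G)
    (hϕ : ∀ r, intLe X (ϕ r) (u.f r)) : GMultiset G where
  f := ϕ
  fin := u.fin.subset fun r hr hu => hr (eq_one_of_intLe_one (hu ▸ hϕ r))

lemma rho_eq_prod_map_sort_of_msub {v u : GMultiset G} (hvu : msub X v u) :
    rho v = ((u.fin.toFinset.sort (· ≤ ·)).map v.f).prod :=
  (Finset.prod_map_sort_eq_of_subset (support_subset_of_msub hvu) fun _ hr => by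
    simpa using hr).symm

lemma memF_of_msub (hX : ∀ g x, x ∈ X → g * x * g⁻¹ ∈ X) {g : G} {u v : GMultiset G}
    (hu : memF X g u) (hvu : msub X v u) : memF X g v := by
  set L := u.fin.toFinset.sort (· ≤ ·)
  have hsumu : (L.map fun r => wlen X (u.f r)).sum = wlen X (L.map u.f).prod := by
    rw [Finset.sum_map_sort]; exact hu.1
  obtain ⟨hsumv, hle⟩ := wlen_prod_map_eq_and_intLe hX hvu L hsumu
  rw [memF, rho_eq_prod_map_sort_of_msub hvu, ← hsumv, Finset.sum_map_sort]
  refine ⟨Finset.sum_subset (support_subset_of_msub hvu) fun r _ hr => ?_, intLe_trans hle hu.2⟩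
  simp [show v.f r = 1 by simpa using hr, wlen_one]

end LowerSet

theorem stmt8_general {G : Type*} [Group G] (X : Set G)
    (hX : ∀ g x, x ∈ X → g * x * g⁻¹ ∈ X)
    (g : G)
    (u : GMultiset G) (hu : memF X g u) :
    Function.Bijective
      (fun v : {v : GMultiset G // memF X g v ∧ msub X v u} =>
        (⟨v.val.f, v.prop.2⟩ : {ϕ : Set.Icc (0 : ℝ) 1 → G // ∀ r, intLe X (ϕ r) (u.f r)})) ∧
    ∀ v w : {v : GMultiset G // memF X g v ∧ msub X v u},
      msub X v.val w.val ↔ ∀ r, intLe X (v.val.f r) (w.val.f r) := by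
  refine ⟨⟨fun v w h => Subtype.ext (GMultiset.ext (congrArg Subtype.val h)), ?_⟩,
    fun _ _ => Iff.rfl⟩
  rintro ⟨ϕ, hϕ⟩
  exact ⟨⟨u.ofForallIntLe ϕ hϕ, memF_of_msub hX hu hϕ, hϕ⟩, rfl⟩

/-- for `u ∈ F(G,g,I)`, the map `v ↦ (v(r))_{r ∈ [0,1]}` is an order
isomorphism from the lower set `↓(u) = {v ∈ F(G,g,I) : v ⊆ u}` onto the product poset
`∏_{r ∈ [0,1]} [1, u(r)]` with the componentwise order (here realized as the poset of
families `ϕ : [0,1] → G` with `ϕ(r) ≤ u(r)` for all `r`, ordered componentwise). -/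
theorem stmt8 {G : Type*} [Group G] (X : Set G)
    (hX : ∀ g x, x ∈ X → g * x * g⁻¹ ∈ X)
    (g : G) (hg : g ∈ Submonoid.closure X)
    (u : GMultiset G) (hu : memF X g u) :
    Function.Bijective
      (fun v : {v : GMultiset G // memF X g v ∧ msub X v u} =>
        (⟨v.val.f, v.prop.2⟩ : {ϕ : Set.Icc (0 : ℝ) 1 → G // ∀ r, intLe X (ϕ r) (u.f r)})) ∧
    ∀ v w : {v : GMultiset G // memF X g v ∧ msub X v u},
      msub X v.val w.val ↔ ∀ r, intLe X (v.val.f r) (w.val.f r) :=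
  stmt8_general X hX g u hu
end

section
/- Let π be a degree-d noncrossing partition of the unit circle S. Then π has only finitely many non-singleton blocks A_1, …, A_k, each of which is a finite set, and the total criticality (|A_1| − 1) + (|A_2| − 1) + ⋯ + (|A_k| − 1) is at most d − 1. -/
/-- The unit circle in `ℂ`. -/
abbrev Circ := {z : ℂ // ‖z‖ = 1}

/-- `p` is (the relation of) a degree-`d` noncrossing partition of the circle:
an equivalence relation whose classes have identical images under `z ↦ z^d` and whose
distinct classes have disjoint convex hulls. -/
def IsNCdPart (d : ℕ) (p : Circ → Circ → Prop) : Prop :=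
  Equivalence p ∧ (∀ z w, p z w → (z : ℂ) ^ d = (w : ℂ) ^ d) ∧
    ∀ z w, ¬ p z w →
      Disjoint (convexHull ℝ (Subtype.val '' {y | p z y}))
        (convexHull ℝ (Subtype.val '' {y | p w y}))

/-- The set of non-singleton blocks of the partition `p`. -/
def ncBlocks (p : Circ → Circ → Prop) : Set (Set Circ) :=
  {B | (∃ z, B = {y | p z y}) ∧ B.Nontrivial}

/-!
Measure a point `z` of the circle by `d · arg z / 2π ∈ (-d/2, d/2]`. A block of a degree-`d`
partition becomes a finite set of reals whose elements differ by integers (as `z ^ d = w ^ d`),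
and distinct blocks are disjoint and do not interlace: two chords of the circle with interlaced
endpoints meet, which the disjointness of the convex hulls forbids.

For such a family inside `(a, b]` the total criticality is `< b - a`, by induction on the number
of points. Singletons contribute nothing, so discard them; let `x₁` be the largest point, `A` its
block and `x₂` the next point of `A` below `x₁`. The blocks lying above `x₂` are inside `(x₂, x₁]`
and contribute less than the integer `x₁ - x₂`, so at most `x₁ - x₂ - 1`; the other blocks,
together with `A \ {x₁}`, lie in `(a, x₂]` and contribute less than `x₂ - a`; the pair `x₂, x₁`
adds `1`.
-/

open Complex Finset

theorem Finset.sum_comp_update_add_one {ι β : Type*} [DecidableEq ι] (s : Finset ι)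
    (P : ι → Prop) [DecidablePred P] {A : ι} (hA : A ∈ s) (hPA : ¬P A) (G : ι → β) (g : β)
    (f : β → ℕ) (hf : f (G A) = f g + 1) :
    ∑ i ∈ s, f (G i) =
      ∑ i ∈ s with P i, f (G i) + ∑ i ∈ s with ¬P i, f (Function.update G A g i) + 1 := by
  have hA' : A ∈ s.filter (¬P ·) := mem_filter.mpr ⟨hA, hPA⟩
  rw [← sum_filter_add_sum_filter_not s P, add_assoc]
  congr 1
  rw [show (fun i => f (Function.update G A g i)) = Function.update (fun i => f (G i)) A (f g)
      from Function.comp_update f G A g, sum_update_of_mem hA',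
    sum_eq_add_sum_sdiff_singleton_of_mem hA', hf]
  ring

/-- The shape of the blocks of a degree-`d` noncrossing partition in the coordinate
`d · arg z / 2π`. -/
structure IsIntNoncrossing {ι : Type*} (s : Finset ι) (G : ι → Finset ℝ) : Prop where
  pairwiseDisjoint : (s : Set ι).PairwiseDisjoint G
  exists_int_sub : ∀ i ∈ s, ∀ x ∈ G i, ∀ y ∈ G i, ∃ k : ℤ, x - y = k
  not_interlaced : ∀ i ∈ s, ∀ j ∈ s, i ≠ j → ∀ x₁ ∈ G i, ∀ x₂ ∈ G i, ∀ y₁ ∈ G j, ∀ y₂ ∈ G j,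
    ¬(x₁ < y₁ ∧ y₁ < x₂ ∧ x₂ < y₂)

namespace IsIntNoncrossing

variable {ι : Type*} {s s' : Finset ι} {G G' : ι → Finset ℝ}

theorem mono (h : IsIntNoncrossing s G) (hs : s' ⊆ s) (hG : ∀ i ∈ s', G' i ⊆ G i) :
    IsIntNoncrossing s' G' where
  pairwiseDisjoint i hi j hj hij :=
    (h.pairwiseDisjoint (hs hi) (hs hj) hij).mono (hG i hi) (hG j hj)
  exists_int_sub i hi x hx y hy := h.exists_int_sub i (hs hi) x (hG i hi hx) y (hG i hi hy)
  not_interlaced i hi j hj hij x₁ hx₁ x₂ hx₂ y₁ hy₁ y₂ hy₂ :=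
    h.not_interlaced i (hs hi) j (hs hj) hij x₁ (hG i hi hx₁) x₂ (hG i hi hx₂) y₁ (hG j hj hy₁)
      y₂ (hG j hj hy₂)

theorem le_of_le_of_le (h : IsIntNoncrossing s G) {i j : ι} (hi : i ∈ s) (hj : j ∈ s)
    (hij : i ≠ j) {x y r t : ℝ} (hy : y ∈ G i) (hx : x ∈ G i) (hr : r ∈ G j) (ht : t ∈ G j)
    (hyr : y ≤ r) (hxt : x ≤ t) : x ≤ r := by
  by_contra! hrx
  have hdisj := disjoint_left.mp (h.pairwiseDisjoint hi hj hij)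
  have hyr' : y < r := hyr.lt_of_ne fun e => hdisj hy (e ▸ hr)
  have hxt' : x < t := hxt.lt_of_ne fun e => hdisj hx (e ▸ ht)
  exact h.not_interlaced i hi j hj hij y hy x hx r hr t ht ⟨hyr', hrx, hxt'⟩

theorem sum_card_sub_one_lt_of_max_mem (h : IsIntNoncrossing s G) {a b : ℝ}
    (hG : ∀ i ∈ s, ↑(G i) ⊆ Set.Ioc a b) {A : ι} {x₁ : ℝ} (hA : A ∈ s) (hx₁ : x₁ ∈ G A)
    (hmax : ∀ i ∈ s, ∀ x ∈ G i, x ≤ x₁) (hne : ((G A).erase x₁).Nonempty)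
    (ih : ∀ t ⊆ s, ∀ G' : ι → Finset ℝ, G' ≤ G →
      ∑ i ∈ t, (G' i).card < ∑ i ∈ s, (G i).card → ∀ a' b' : ℝ, a' < b' →
        (∀ i ∈ t, ↑(G' i) ⊆ Set.Ioc a' b') → ((∑ i ∈ t, ((G' i).card - 1) : ℕ) : ℝ) < b' - a') :
    ((∑ i ∈ s, ((G i).card - 1) : ℕ) : ℝ) < b - a := by
  classical
  set x₂ := ((G A).erase x₁).max' hne
  have hx₂ : x₂ ∈ (G A).erase x₁ := max'_mem _ _
  have hx₂A : x₂ ∈ G A := mem_of_mem_erase hx₂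
  have hx₂₁ : x₂ < x₁ := (hmax A hA x₂ hx₂A).lt_of_ne (ne_of_mem_erase hx₂)
  have hPA : ¬∀ x ∈ G A, x₂ < x := fun hP => lt_irrefl _ (hP x₂ hx₂A)
  have hsplit := sum_comp_update_add_one s (fun i => ∀ x ∈ G i, x₂ < x) hA hPA G ((G A).erase x₁)
  set inner := s.filter fun i => ∀ x ∈ G i, x₂ < x
  set outer := s.filter fun i => ¬∀ x ∈ G i, x₂ < x
  set G' := Function.update G A ((G A).erase x₁)
  have hcard := hsplit card (card_erase_add_one hx₁).symm
  have hcrit := hsplit (card · - 1) (show (G A).card - 1 = ((G A).erase x₁).card - 1 + 1 by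
    have := card_pos.mpr hne; have := card_erase_add_one hx₁; omega)
  have hG'sub : ∀ i ∈ outer, ↑(G' i) ⊆ Set.Ioc a x₂ := by
    intro i hi x hx
    obtain ⟨his, hPi⟩ := mem_filter.mp hi
    rcases eq_or_ne i A with rfl | hiA
    · simp only [G', Function.update_self, coe_erase, Set.mem_sdiff, mem_coe] at hx
      exact ⟨(hG i his hx.1).1, le_max' _ x (mem_erase.mpr ⟨hx.2, hx.1⟩)⟩
    · simp only [G', Function.update_of_ne hiA, mem_coe] at hx
      obtain ⟨y, hy, hyx₂⟩ : ∃ y ∈ G i, y ≤ x₂ := by simpa using hPi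
      exact ⟨(hG i his hx).1, h.le_of_le_of_le his hA hiA hy hx hx₂A hx₁ hyx₂ (hmax i his x hx)⟩
  have hin := ih inner (filter_subset _ _) G le_rfl (by omega) x₂ x₁ hx₂₁
    fun i hi x hx => ⟨(mem_filter.mp hi).2 x hx, hmax i (mem_filter.mp hi).1 x hx⟩
  have hout := ih outer (filter_subset _ _) G'
    (update_le_iff.mpr ⟨erase_subset _ _, fun _ _ => le_rfl⟩) (by omega) a x₂
    (hG A hA hx₂A).1 hG'sub
  obtain ⟨k, hk⟩ := h.exists_int_sub A hA x₁ hx₁ x₂ hx₂A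
  rw [hk] at hin
  have hin' : ((∑ i ∈ inner, ((G i).card - 1) : ℕ) : ℝ) ≤ k - 1 := by
    exact_mod_cast Int.le_sub_one_of_lt (by exact_mod_cast hin)
  rw [hcrit, Nat.cast_add, Nat.cast_add, Nat.cast_one]
  linarith [(hG A hA hx₁).2]

theorem sum_card_sub_one_lt (h : IsIntNoncrossing s G) {a b : ℝ} (hab : a < b)
    (hG : ∀ i ∈ s, ↑(G i) ⊆ Set.Ioc a b) :
    ((∑ i ∈ s, ((G i).card - 1) : ℕ) : ℝ) < b - a := by
  classical
  induction hn : ∑ i ∈ s, (G i).card using Nat.strong_induction_on generalizing s G a b with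
  | _ n ih =>
  rw [← sum_filter_of_ne (p := fun i => 1 < (G i).card) fun i _ hi => by omega]
  set s' := s.filter fun i => 1 < (G i).card
  have hs' : s' ⊆ s := filter_subset _ _
  have h' : IsIntNoncrossing s' G := h.mono hs' fun _ _ => subset_rfl
  rcases s'.eq_empty_or_nonempty with hs'e | ⟨i₀, hi₀⟩
  · simp [hs'e, hab]
  obtain ⟨x₀, hx₀⟩ := card_pos.mp (zero_lt_one.trans (mem_filter.mp hi₀).2)
  have hT : (s'.biUnion G).Nonempty := ⟨x₀, mem_biUnion.mpr ⟨i₀, hi₀, hx₀⟩⟩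
  set x₁ := (s'.biUnion G).max' hT
  obtain ⟨A, hA, hx₁⟩ : ∃ A ∈ s', x₁ ∈ G A := mem_biUnion.mp (max'_mem _ hT)
  have hne : ((G A).erase x₁).Nonempty := by
    rw [← card_pos, card_erase_of_mem hx₁]; have := (mem_filter.mp hA).2; omega
  have hcard : ∑ i ∈ s', (G i).card ≤ n := hn ▸ sum_le_sum_of_subset hs'
  refine h'.sum_card_sub_one_lt_of_max_mem (fun i hi => hG i (hs' hi)) hA hx₁
    (fun i hi x hx => le_max' _ _ (mem_biUnion.mpr ⟨i, hi, hx⟩)) hne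
    fun t ht G' hG' hlt a' b' hab' hG'' => ?_
  exact ih _ (by omega) (h'.mono ht fun i _ => hG' i) hab' hG'' rfl

end IsIntNoncrossing

theorem ofReal_sin_half_sub (x y : ℝ) :
    (Real.sin ((y - x) / 2) : ℂ) =
      (exp (↑(y / 2) * I) ^ 2 - exp (↑(x / 2) * I) ^ 2) /
        (2 * I * exp (↑(x / 2) * I) * exp (↑(y / 2) * I)) := by
  have hx := exp_ne_zero (↑(x / 2) * I)
  have hy := exp_ne_zero (↑(y / 2) * I)
  have h₁ : exp (↑((y - x) / 2) * I) = exp (↑(y / 2) * I) / exp (↑(x / 2) * I) := by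
    rw [← exp_sub]; push_cast; ring_nf
  have h₂ : exp (-↑((y - x) / 2) * I) = exp (↑(x / 2) * I) / exp (↑(y / 2) * I) := by
    rw [← exp_sub]; push_cast; ring_nf
  rw [ofReal_sin, sin, h₁, h₂]
  field_simp
  rw [I_sq]
  ring

theorem exp_ofReal_mul_I_eq_sq (x : ℝ) : exp (x * I) = exp (↑(x / 2) * I) ^ 2 := by
  rw [sq, ← exp_add]; push_cast; ring_nf

theorem chord_identity (θ₁ θ₂ θ₃ θ₄ : ℝ) :
    let σ : ℝ → ℝ → ℂ := fun x y => Real.sin ((y - x) / 2)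
    (σ θ₂ θ₃ * σ θ₃ θ₄ * exp (θ₁ * I) + σ θ₁ θ₂ * σ θ₁ θ₄ * exp (θ₃ * I)) *
        (σ θ₁ θ₂ * σ θ₂ θ₃ + σ θ₁ θ₄ * σ θ₃ θ₄) =
      (σ θ₁ θ₄ * σ θ₃ θ₄ * exp (θ₂ * I) + σ θ₁ θ₂ * σ θ₂ θ₃ * exp (θ₄ * I)) *
        (σ θ₁ θ₂ * σ θ₁ θ₄ + σ θ₂ θ₃ * σ θ₃ θ₄) := by
  intro σ
  simp only [σ]
  rw [ofReal_sin_half_sub θ₁ θ₂, ofReal_sin_half_sub θ₂ θ₃, ofReal_sin_half_sub θ₃ θ₄,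
    ofReal_sin_half_sub θ₁ θ₄, exp_ofReal_mul_I_eq_sq θ₁, exp_ofReal_mul_I_eq_sq θ₂,
    exp_ofReal_mul_I_eq_sq θ₃, exp_ofReal_mul_I_eq_sq θ₄]
  have := exp_ne_zero (↑(θ₁ / 2) * I)
  have := exp_ne_zero (↑(θ₂ / 2) * I)
  have := exp_ne_zero (↑(θ₃ / 2) * I)
  have := exp_ne_zero (↑(θ₄ / 2) * I)
  generalize exp (↑(θ₁ / 2) * I) = α at *
  generalize exp (↑(θ₂ / 2) * I) = β at *
  generalize exp (↑(θ₃ / 2) * I) = γ at *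
  generalize exp (↑(θ₄ / 2) * I) = δ at *
  field_simp
  ring

/-- With `eᵢ = exp (θᵢ * I)`, `sin ((θⱼ - θᵢ) / 2)` is half the length of the chord `eᵢeⱼ`. The
common point divides `e₁e₃` in the ratio of the areas of the triangles `e₁e₂e₄` and `e₃e₂e₄`, whose
angles at `e₁` and `e₃` are supplementary; this gives the weights below. -/
theorem segment_inter_segment_nonempty {θ₁ θ₂ θ₃ θ₄ : ℝ} (h₁₂ : θ₁ < θ₂) (h₂₃ : θ₂ < θ₃)
    (h₃₄ : θ₃ < θ₄) (h₄₁ : θ₄ < θ₁ + 2 * Real.pi) :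
    (segment ℝ (exp (θ₁ * I)) (exp (θ₃ * I)) ∩
      segment ℝ (exp (θ₂ * I)) (exp (θ₄ * I))).Nonempty := by
  have sin_pos {x y : ℝ} (hxy : x < y) (hyx : y < x + 2 * Real.pi) :
      0 < Real.sin ((y - x) / 2) :=
    Real.sin_pos_of_pos_of_lt_pi (by linarith) (by linarith)
  have key := chord_identity θ₁ θ₂ θ₃ θ₄
  dsimp only at key
  set s₁₂ := Real.sin ((θ₂ - θ₁) / 2)
  set s₂₃ := Real.sin ((θ₃ - θ₂) / 2)
  set s₃₄ := Real.sin ((θ₄ - θ₃) / 2)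
  set s₁₄ := Real.sin ((θ₄ - θ₁) / 2)
  have h₁₂ : 0 < s₁₂ := sin_pos h₁₂ (by linarith)
  have h₂₃ : 0 < s₂₃ := sin_pos h₂₃ (by linarith)
  have h₃₄ : 0 < s₃₄ := sin_pos h₃₄ (by linarith)
  have h₁₄ : 0 < s₁₄ := sin_pos (by linarith) h₄₁
  have hD₁ : 0 < s₁₂ * s₁₄ + s₂₃ * s₃₄ := by positivity
  have hD₂ : 0 < s₁₂ * s₂₃ + s₁₄ * s₃₄ := by positivity
  refine ⟨(s₂₃ * s₃₄ / (s₁₂ * s₁₄ + s₂₃ * s₃₄)) • exp (θ₁ * I) +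
      (s₁₂ * s₁₄ / (s₁₂ * s₁₄ + s₂₃ * s₃₄)) • exp (θ₃ * I),
    ⟨_, _, by positivity, by positivity, by field_simp; ring, rfl⟩,
    ⟨s₁₄ * s₃₄ / (s₁₂ * s₂₃ + s₁₄ * s₃₄), s₁₂ * s₂₃ / (s₁₂ * s₂₃ + s₁₄ * s₃₄),
      by positivity, by positivity, by field_simp; ring, ?_⟩⟩
  have hD₁' : ((s₁₂ * s₁₄ + s₂₃ * s₃₄ : ℝ) : ℂ) ≠ 0 := by exact_mod_cast hD₁.ne'
  have hD₂' : ((s₁₂ * s₂₃ + s₁₄ * s₃₄ : ℝ) : ℂ) ≠ 0 := by exact_mod_cast hD₂.ne'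
  simp only [real_smul]
  push_cast at hD₁' hD₂' ⊢
  simp only [div_mul_eq_mul_div, ← add_div]
  rw [div_eq_div_iff hD₂' hD₁']
  linear_combination -key

theorem finite_setOf_pow_eq {R : Type*} [CommRing R] [IsDomain R] {d : ℕ} (hd : 0 < d) (a : R) :
    {x : R | x ^ d = a}.Finite := by
  classical
  convert (Polynomial.nthRoots d a).toFinset.finite_toSet
  ext
  simp [Polynomial.mem_nthRoots hd]

namespace Circ

theorem exp_arg_mul_I (z : Circ) : exp (arg z * I) = z := by
  simpa [z.2] using norm_mul_exp_arg_mul_I (z : ℂ)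

theorem arg_injective : Function.Injective fun z : Circ => arg z :=
  fun z w h => Subtype.ext (ext_norm_arg (z.2.trans w.2.symm) h)

/-- The argument in units of `2π / d`: then `z ^ d = w ^ d` exactly when the values at `z` and
`w` differ by an integer. -/
noncomputable def scaledArg (d : ℕ) (z : Circ) : ℝ := d * arg z / (2 * Real.pi)

variable {d : ℕ} {z w : Circ}

theorem scaledArg_lt_scaledArg_iff (hd : 0 < d) :
    scaledArg d z < scaledArg d w ↔ arg z < arg w := by
  unfold scaledArg
  rw [div_lt_div_iff_of_pos_right (by positivity), mul_lt_mul_iff_right₀ (by exact_mod_cast hd)]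

theorem scaledArg_injective (hd : 0 < d) : Function.Injective (scaledArg d) := by
  intro z w h
  refine arg_injective (le_antisymm ?_ ?_) <;>
    exact not_lt.mp fun hlt => ((scaledArg_lt_scaledArg_iff hd).mpr hlt).ne (by simp [h])

theorem scaledArg_mem_Ioc (hd : 0 < d) (z : Circ) :
    scaledArg d z ∈ Set.Ioc (-(d / 2 : ℝ)) (d / 2) := by
  have hd' : (0 : ℝ) < d := by exact_mod_cast hd
  have := Real.pi_pos
  unfold scaledArg
  constructor
  · rw [lt_div_iff₀ (by positivity)]
    nlinarith [neg_pi_lt_arg (z : ℂ)]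
  · rw [div_le_iff₀ (by positivity)]
    nlinarith [arg_le_pi (z : ℂ)]

theorem exists_int_scaledArg_sub_scaledArg (h : (z : ℂ) ^ d = (w : ℂ) ^ d) :
    ∃ k : ℤ, scaledArg d z - scaledArg d w = k := by
  rw [← exp_arg_mul_I z, ← exp_arg_mul_I w, ← exp_nat_mul, ← exp_nat_mul,
    exp_eq_exp_iff_exists_int] at h
  obtain ⟨k, hk⟩ := h
  refine ⟨k, ?_⟩
  have hk' : (d * arg z : ℝ) = d * arg w + k * (2 * Real.pi) := by
    apply ofReal_injective
    apply mul_right_cancel₀ I_ne_zero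
    push_cast
    linear_combination hk
  unfold scaledArg
  field_simp
  linear_combination hk'

end Circ

namespace IsNCdPart

variable {d : ℕ} {p : Circ → Circ → Prop} {B C : Set Circ}

theorem pow_eq_of_mem (hp : IsNCdPart d p) (hB : B ∈ ncBlocks p) {y y' : Circ} (hy : y ∈ B)
    (hy' : y' ∈ B) : (y : ℂ) ^ d = (y' : ℂ) ^ d := by
  obtain ⟨⟨z, rfl⟩, -⟩ := hB
  exact hp.2.1 y y' (hp.1.trans (hp.1.symm hy) hy')

theorem finite_of_mem_ncBlocks (hd : 0 < d) (hp : IsNCdPart d p) (hB : B ∈ ncBlocks p) :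
    B.Finite := by
  obtain ⟨z, hz⟩ := hB.2.nonempty
  exact ((finite_setOf_pow_eq hd ((z : ℂ) ^ d)).preimage Subtype.val_injective.injOn).subset
    fun y hy => hp.pow_eq_of_mem hB hy hz

theorem disjoint_convexHull (hp : IsNCdPart d p) (hB : B ∈ ncBlocks p) (hC : C ∈ ncBlocks p)
    (hBC : B ≠ C) :
    Disjoint (convexHull ℝ (Subtype.val '' B)) (convexHull ℝ (Subtype.val '' C)) := by
  obtain ⟨⟨z, rfl⟩, -⟩ := hB
  obtain ⟨⟨w, rfl⟩, -⟩ := hC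
  refine hp.2.2 z w fun hzw => hBC ?_
  ext y
  exact ⟨hp.1.trans (hp.1.symm hzw), hp.1.trans hzw⟩

theorem not_arg_interlaced (hp : IsNCdPart d p) (hB : B ∈ ncBlocks p) (hC : C ∈ ncBlocks p)
    (hBC : B ≠ C) {z₁ z₂ w₁ w₂ : Circ} (hz₁ : z₁ ∈ B) (hz₂ : z₂ ∈ B) (hw₁ : w₁ ∈ C)
    (hw₂ : w₂ ∈ C) : ¬(arg z₁ < arg w₁ ∧ arg w₁ < arg z₂ ∧ arg z₂ < arg w₂) := by
  rintro ⟨h₁, h₂, h₃⟩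
  obtain ⟨X, hXB, hXC⟩ := segment_inter_segment_nonempty h₁ h₂ h₃
    (by linarith [neg_pi_lt_arg (z₁ : ℂ), arg_le_pi (w₂ : ℂ)])
  simp only [Circ.exp_arg_mul_I] at hXB hXC
  exact Set.disjoint_left.mp (hp.disjoint_convexHull hB hC hBC)
    (segment_subset_convexHull (Set.mem_image_of_mem _ hz₁) (Set.mem_image_of_mem _ hz₂) hXB)
    (segment_subset_convexHull (Set.mem_image_of_mem _ hw₁) (Set.mem_image_of_mem _ hw₂) hXC)

theorem isIntNoncrossing (hd : 0 < d) (hp : IsNCdPart d p) {t : Finset (Set Circ)}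
    (ht : ↑t ⊆ ncBlocks p) {G : Set Circ → Finset ℝ}
    (hG : ∀ B ∈ t, ↑(G B) = Circ.scaledArg d '' B) : IsIntNoncrossing t G := by
  have hmem : ∀ B ∈ t, ∀ x, x ∈ G B ↔ ∃ z ∈ B, Circ.scaledArg d z = x := fun B hB x => by
    rw [← mem_coe, hG B hB]; rfl
  refine ⟨fun B hB C hC hBC => ?_, fun B hB x hx y hy => ?_,
    fun B hB C hC hBC x₁ hx₁ x₂ hx₂ y₁ hy₁ y₂ hy₂ => ?_⟩
  · change Disjoint (G B) (G C)
    rw [← disjoint_coe, hG B hB, hG C hC, Set.disjoint_image_iff (Circ.scaledArg_injective hd),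
      ← Set.disjoint_image_iff Subtype.val_injective]
    exact (hp.disjoint_convexHull (ht hB) (ht hC) hBC).mono (subset_convexHull ℝ _)
      (subset_convexHull ℝ _)
  · obtain ⟨z, hz, rfl⟩ := (hmem B hB x).mp hx
    obtain ⟨w, hw, rfl⟩ := (hmem B hB y).mp hy
    exact Circ.exists_int_scaledArg_sub_scaledArg (hp.pow_eq_of_mem (ht hB) hz hw)
  · obtain ⟨z₁, hz₁, rfl⟩ := (hmem B hB x₁).mp hx₁
    obtain ⟨z₂, hz₂, rfl⟩ := (hmem B hB x₂).mp hx₂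
    obtain ⟨w₁, hw₁, rfl⟩ := (hmem C hC y₁).mp hy₁
    obtain ⟨w₂, hw₂, rfl⟩ := (hmem C hC y₂).mp hy₂
    simp only [Circ.scaledArg_lt_scaledArg_iff hd]
    exact hp.not_arg_interlaced (ht hB) (ht hC) hBC hz₁ hz₂ hw₁ hw₂

theorem sum_ncard_sub_one_lt (hd : 0 < d) (hp : IsNCdPart d p) {t : Finset (Set Circ)}
    (ht : ↑t ⊆ ncBlocks p) : ∑ B ∈ t, (B.ncard - 1) < d := by
  have hG : ∀ B ∈ t, ∃ G : Finset ℝ, ↑G = Circ.scaledArg d '' B ∧ G.card = B.ncard :=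
    fun B hB => by
      have hfin := hp.finite_of_mem_ncBlocks hd (ht hB)
      refine ⟨(hfin.image (Circ.scaledArg d)).toFinset, by simp, ?_⟩
      rw [← Set.ncard_eq_toFinset_card _ (hfin.image _),
        Set.ncard_image_of_injective _ (Circ.scaledArg_injective hd)]
  choose! G hGimage hGcard using hG
  have hd' : (0 : ℝ) < d := by exact_mod_cast hd
  have key := (hp.isIntNoncrossing hd ht hGimage).sum_card_sub_one_lt (a := -(d / 2 : ℝ))
    (b := d / 2) (by linarith) fun B hB x hx => by
      obtain ⟨z, -, rfl⟩ : x ∈ Circ.scaledArg d '' B := hGimage B hB ▸ hx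
      exact Circ.scaledArg_mem_Ioc hd z
  rw [sum_congr rfl fun B hB => by rw [hGcard B hB]] at key
  exact_mod_cast (key.trans_eq (by ring) : _ < (d : ℝ))

end IsNCdPart

/-- a degree-`d` noncrossing partition of the circle has finitely many
non-singleton blocks `A₁, …, A_k`, each finite, and its total criticality
`(|A₁| − 1) + ⋯ + (|A_k| − 1)` is at most `d − 1`. -/
theorem stmt11 (d : ℕ) (hd : 1 ≤ d) (p : Circ → Circ → Prop) (hp : IsNCdPart d p) :
    (ncBlocks p).Finite ∧ (∀ B ∈ ncBlocks p, B.Finite) ∧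
      ∑ᶠ B ∈ ncBlocks p, (B.ncard - 1) ≤ d - 1 := by
  have hfin : ∀ B ∈ ncBlocks p, B.Finite := fun B hB => hp.finite_of_mem_ncBlocks hd hB
  have hpos : ∀ B ∈ ncBlocks p, 1 ≤ B.ncard - 1 := fun B hB => by
    have := (Set.one_lt_ncard (hfin B hB)).mpr hB.2
    omega
  have hblocks : (ncBlocks p).Finite := by
    by_contra hinf
    obtain ⟨t, ht, rfl⟩ := Set.Infinite.exists_subset_card_eq hinf d
    have hsum := hp.sum_ncard_sub_one_lt hd ht
    have hcard := t.card_nsmul_le_sum _ 1 fun B hB => hpos B (ht hB)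
    rw [smul_eq_mul, mul_one] at hcard
    omega
  refine ⟨hblocks, hfin, ?_⟩
  rw [finsum_mem_eq_finite_toFinset_sum _ hblocks]
  have := hp.sum_ncard_sub_one_lt hd (t := hblocks.toFinset) (by simp)
  omega
end
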